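/- The representable-polynomial functor is adjoint to global sections: for any type A and any polynomial functor p, the type of natural transformations from the associated functor of p to the representable functor X ↦ (A → X) is in bijection with the type of functions A → Γp, where Γp := Π (i : p.A), p.B i is the set of global sections of p. -/

import Mathlib

/-!
A natural transformation `η : p ⟶ y^A` is determined, by naturality, by its values on the
generic elements `⟨i, id⟩ ∈ p (p.B i)`: an element `⟨i, v⟩ ∈ p X` is the image of `⟨i, id⟩`
under `p v`, so `η ⟨i, v⟩ = v ∘ η ⟨i, id⟩`. Conversely any family of maps `A → p.B i` defines
a natural transformation by this formula, and such a family is exactly a map `A → Π i, p.B i`.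
-/

open CategoryTheory

universe u

/-- The associated functor `Type u ⥤ Type u` of a polynomial functor. -/
def PFunctor.toFunctor (P : PFunctor.{u}) : Type u ⥤ Type u where
  obj X := P.Obj X
  map f := TypeCat.ofHom fun x => P.map f x
  map_id := by intro X; refine ConcreteCategory.hom_ext _ _ fun x => ?_; exact P.id_map x
  map_comp := by intro X Y Z f g; refine ConcreteCategory.hom_ext _ _ fun x => ?_; exact (P.map_map f g x).symm

/-- The representable functor `X ↦ (A → X)`. -/
def repFun (A : Type u) : Type u ⥤ Type u where
  obj X := A → X
  map f := TypeCat.ofHom fun g => f ∘ g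
  map_id := by intro X; ext g; rfl
  map_comp := by intro X Y Z f g; ext h; rfl

namespace PFunctor

variable {A : Type u} {p : PFunctor.{u}}

def toRepFunOfSections (g : A → ∀ i, p.B i) : p.toFunctor ⟶ repFun A where
  app X := TypeCat.ofHom fun (x : p.Obj X) a => x.2 (g a x.1)
  naturality _ _ _ := rfl

def sectionsOfToRepFun (η : p.toFunctor ⟶ repFun A) : A → ∀ i, p.B i :=
  fun a i => η.app (p.B i) (⟨i, id⟩ : p.Obj (p.B i)) a

theorem toRepFun_app_mk (η : p.toFunctor ⟶ repFun A) {X : Type u} (i : p.A) (v : p.B i → X) :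
    η.app X (⟨i, v⟩ : p.Obj X) = v ∘ η.app (p.B i) (⟨i, id⟩ : p.Obj (p.B i)) :=
  NatTrans.naturality_apply η (TypeCat.ofHom v) (⟨i, id⟩ : p.Obj (p.B i))

def toRepFunEquivSections : (p.toFunctor ⟶ repFun A) ≃ (A → ∀ i, p.B i) where
  toFun := sectionsOfToRepFun
  invFun := toRepFunOfSections
  left_inv η := by
    ext X ⟨i, v⟩
    exact (toRepFun_app_mk η i v).symm
  right_inv _ := rfl

end PFunctor

/-- the representable-polynomial functor is adjoint to global sections:
`Nat(p, y^A) ≅ (A → Γp)` where `Γp = Π (i : p.A), p.B i`. -/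
theorem stmt_12 (A : Type u) (p : PFunctor.{u}) :
    Nonempty ((p.toFunctor ⟶ repFun A) ≃ (A → ∀ i : p.A, p.B i)) :=
  ⟨PFunctor.toRepFunEquivSections⟩
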